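/- arXiv:1510.08904 — 6 statements merged into one kernel-verified Lean document; each statement's English description precedes it below -/
import Mathlib

section
/- (Jacobson's theorem on weakly closed sets) Let 𝔇 be a weakly closed subset of an associative algebra 𝔘 of linear transformations of a finite-dimensional vector space V over a field F, and assume every element of 𝔇 is nilpotent. Then the non-unital associative subalgebra generated by 𝔇 is nilpotent (as an associative algebra). -/
/-- A Lie superalgebra structure on an `F`-module `L`: an internal direct sum
decomposition `L = L₀ ⊕ L₁` together with a bilinear bracket satisfying the grading,
super-anticommutativity and super-Jacobi identities (the latter two stated for
homogeneous arguments and extended by bilinearity). -/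
structure LieSuperStruct (F : Type*) (L : Type*) [Field F] [AddCommGroup L]
    [Module F L] where
  L0 : Submodule F L
  L1 : Submodule F L
  compl : IsCompl L0 L1
  bracket : L →ₗ[F] L →ₗ[F] L
  grade00 : ∀ x ∈ L0, ∀ y ∈ L0, bracket x y ∈ L0
  grade01 : ∀ x ∈ L0, ∀ y ∈ L1, bracket x y ∈ L1
  grade10 : ∀ x ∈ L1, ∀ y ∈ L0, bracket x y ∈ L1
  grade11 : ∀ x ∈ L1, ∀ y ∈ L1, bracket x y ∈ L0
  anti_even : ∀ x ∈ L0, ∀ y : L, bracket x y = - bracket y x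
  anti_odd : ∀ x ∈ L1, ∀ y ∈ L1, bracket x y = bracket y x
  jacobi_even : ∀ x ∈ L0, ∀ y z : L,
    bracket x (bracket y z) = bracket (bracket x y) z + bracket y (bracket x z)
  jacobi_odd_even : ∀ x ∈ L1, ∀ y ∈ L0, ∀ z : L,
    bracket x (bracket y z) = bracket (bracket x y) z + bracket y (bracket x z)
  jacobi_odd_odd : ∀ x ∈ L1, ∀ y ∈ L1, ∀ z : L,
    bracket x (bracket y z) = bracket (bracket x y) z - bracket y (bracket x z)

namespace LieSuperStruct

variable {F L : Type*} [Field F] [AddCommGroup L] [Module F L]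

/-- The span of all brackets `(x, y)` with `x ∈ M`, `y ∈ N`. -/
def bracketSpan (S : LieSuperStruct F L) (M N : Submodule F L) : Submodule F L :=
  Submodule.span F {w | ∃ x ∈ M, ∃ y ∈ N, w = S.bracket x y}

/-- Lower central series of a subalgebra `N`: `γ₁ = N`, `γ_{n+1} = (γₙ, N)`. -/
def lcsOn (S : LieSuperStruct F L) (N : Submodule F L) : ℕ → Submodule F L
  | 0 => N
  | n + 1 => S.bracketSpan (S.lcsOn N n) N

/-- Lower central series of `L` itself. -/
def lcs (S : LieSuperStruct F L) : ℕ → Submodule F L := S.lcsOn ⊤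

/-- A Lie superalgebra is nilpotent if its lower central series vanishes. -/
def IsNilpotent (S : LieSuperStruct F L) : Prop := ∃ n, S.lcs n = ⊥

/-- `A` is an ideal of `L`. -/
def IsIdeal (S : LieSuperStruct F L) (A : Submodule F L) : Prop :=
  ∀ x ∈ A, ∀ y : L, S.bracket x y ∈ A ∧ S.bracket y x ∈ A

/-- `A` is a homogeneous (graded) submodule. -/
def IsHomogeneous (S : LieSuperStruct F L) (A : Submodule F L) : Prop :=
  A = (A ⊓ S.L0) ⊔ (A ⊓ S.L1)

/-- The adjoint map of `x`. -/
def ad (S : LieSuperStruct F L) (x : L) : Module.End F L := S.bracket x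

end LieSuperStruct

/-- The left-normed `n`-fold iterated Lie commutator `[x, y, y, …, y]` in an
associative ring. -/
def engelIter {U : Type*} [Ring U] (y : U) (n : ℕ) (x : U) : U :=
  (fun a => a * y - y * a)^[n] x

/-- An associative ring is bounded Lie Engel if it satisfies `[x, y, …, y] = 0`
(`y` repeated `n` times) identically for some `n ≥ 1`. -/
def IsBoundedLieEngel (U : Type*) [Ring U] : Prop :=
  ∃ n : ℕ, 0 < n ∧ ∀ x y : U, engelIter y n x = 0

/-- The (two-sided) ideal of an associative `F`-algebra generated by all
commutators, as an `F`-submodule. -/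
def commIdeal (F U : Type*) [Field F] [Ring U] [Algebra F U] : Submodule F U :=
  Submodule.span F {w | ∃ a x y b : U, w = a * (x * y - y * x) * b}

/-- Lower central series of the associative algebra `U` viewed as a Lie algebra
under the commutator. -/
def assocLcs (F U : Type*) [Field F] [Ring U] [Algebra F U] : ℕ → Submodule F U
  | 0 => ⊤
  | n + 1 => Submodule.span F {w | ∃ a ∈ assocLcs F U n, ∃ b : U, w = a * b - b * a}

/-- `U` is Lie nilpotent: the lower central series of `(U, [·,·])` terminates. -/
def IsLieNilpotentAlg (F U : Type*) [Field F] [Ring U] [Algebra F U] : Prop :=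
  ∃ n, assocLcs F U n = ⊥

/-- `U` satisfies a (nontrivial) polynomial identity. -/
def IsPI (F U : Type*) [Field F] [Ring U] [Algebra F U] : Prop :=
  ∃ (n : ℕ) (f : FreeAlgebra F (Fin n)), f ≠ 0 ∧
    ∀ v : Fin n → U, FreeAlgebra.lift F v f = 0

/-- `U` satisfies a non-matrix polynomial identity: a PI which fails in `M₂(F)`. -/
def IsNonMatrixPI (F U : Type*) [Field F] [Ring U] [Algebra F U] : Prop :=
  ∃ (n : ℕ) (f : FreeAlgebra F (Fin n)),
    (∀ v : Fin n → U, FreeAlgebra.lift F v f = 0) ∧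
    ∃ w : Fin n → Matrix (Fin 2) (Fin 2) F, FreeAlgebra.lift F w f ≠ 0

/-- `U` together with `ι : L → U` is (a realization of) the universal enveloping
algebra of the Lie superalgebra `L`: `ι` is an injective linear map satisfying the
super-commutation relations, its image generates `U`, and the pair has the
universal property. -/
structure IsUEA (F : Type*) {L : Type*} [Field F] [AddCommGroup L] [Module F L]
    (S : LieSuperStruct F L) (U : Type*) [Ring U] [Algebra F U]
    (ι : L →ₗ[F] U) : Prop where
  rel_even : ∀ x ∈ S.L0, ∀ y : L, ι x * ι y - ι y * ι x = ι (S.bracket x y)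
  rel_odd : ∀ x ∈ S.L1, ∀ y ∈ S.L1, ι x * ι y + ι y * ι x = ι (S.bracket x y)
  inj : Function.Injective ι
  gen : Algebra.adjoin F (Set.range ι) = ⊤
  univ : ∀ (B : Type) [Ring B] [Algebra F B] (φ : L →ₗ[F] B),
    (∀ x ∈ S.L0, ∀ y : L, φ x * φ y - φ y * φ x = φ (S.bracket x y)) →
    (∀ x ∈ S.L1, ∀ y ∈ S.L1, φ x * φ y + φ y * φ x = φ (S.bracket x y)) →
    ∃! ψ : U →ₐ[F] B, ∀ x : L, ψ (ι x) = φ x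

/-!
Among the subsets `B ⊆ D` generating a nilpotent algebra `E`, pick one with `E` maximal.
If some `c ∈ D \ E` satisfies `c b + γ b c ∈ E` for every `b ∈ B`, then `c E ⊆ E F[c]`:
in products of elements of `B ∪ {c}` every `c` can be moved to the right, so `B ∪ {c}` still
generates a nilpotent algebra, contradicting maximality. Otherwise weak closure turns any
`x ∈ D \ E` into some `x b + γ b x ∈ D \ E` with `b ∈ B`, again and again; but the `n`-th
element of such a chain is a sum of products with `n` factors from `E` around `x`, which vanish
for large `n`. Hence `D ⊆ E`.
-/
section Semiring

open Submodule

variable {F R : Type*} [CommSemiring F] [Semiring R] [Algebra F R]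

theorem Submodule.isNilpotent_of_le {M N : Submodule F R} (h : M ≤ N) (hN : IsNilpotent N) :
    IsNilpotent M := by
  obtain ⟨r, hr⟩ := hN
  exact ⟨r, le_antisymm ((pow_le_pow_left' h r).trans hr.le) bot_le⟩

theorem Submodule.list_prod_mem_pow {M : Submodule F R} {l : List R} (h : ∀ x ∈ l, x ∈ M) :
    l.prod ∈ M ^ l.length := by
  induction l with
  | nil => exact mem_one.2 ⟨1, map_one _⟩
  | cons x l ih =>
    rw [List.prod_cons, List.length_cons, pow_succ']
    exact mul_mem_mul (h x List.mem_cons_self) (ih fun y hy => h y (List.mem_cons_of_mem x hy))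

theorem Submodule.one_sup_mul_self_le {N : Submodule F R} (hN : N * N ≤ N) :
    (1 ⊔ N) * (1 ⊔ N) ≤ 1 ⊔ N := by
  simp only [Submodule.mul_sup, Submodule.sup_mul, one_mul, mul_one]
  exact sup_le (sup_le le_sup_left le_sup_right) (sup_le le_sup_right (hN.trans le_sup_right))

theorem Submodule.one_sup_mul_le {C P : Submodule F R} (h : C * P ≤ P) : (1 ⊔ C) * P ≤ P := by
  rw [Submodule.sup_mul, one_mul]
  exact sup_le le_rfl h

theorem Submodule.le_mul_one_sup (N C : Submodule F R) : N ≤ N * (1 ⊔ C) := by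
  simpa using mul_le_mul' (le_refl N) (le_sup_left : 1 ≤ 1 ⊔ C)

theorem NonUnitalSubalgebra.toSubmodule_mul_self_le (S : NonUnitalSubalgebra F R) :
    S.toSubmodule * S.toSubmodule ≤ S.toSubmodule :=
  mul_le.2 fun _ hx _ hy => mul_mem (s := S) hx hy

theorem NonUnitalAlgebra.adjoin_toSubmodule_le_of_mul_mem {s : Set R} {X : Submodule F R}
    (hs : s ⊆ X) (hmul : ∀ b ∈ s, ∀ x ∈ X, b * x ∈ X) :
    (adjoin F s).toSubmodule ≤ X := by
  intro x hx
  suffices x ∈ X ∧ ∀ y ∈ X, x * y ∈ X from this.1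
  induction hx using NonUnitalAlgebra.adjoin_induction with
  | mem b hb => exact ⟨hs hb, hmul b hb⟩
  | add x y _ _ hx hy =>
    exact ⟨add_mem hx.1 hy.1,
      fun z hz => (add_mul x y z).symm ▸ add_mem (hx.2 z hz) (hy.2 z hz)⟩
  | zero => exact ⟨zero_mem X, fun z _ => (zero_mul z).symm ▸ zero_mem X⟩
  | mul x y _ _ hx hy =>
    exact ⟨hx.2 y hy.1, fun z hz => (mul_assoc x y z).symm ▸ hx.2 _ (hy.2 z hz)⟩
  | smul r x _ hx =>
    exact ⟨smul_mem X r hx.1,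
      fun z hz => (smul_mul_assoc r x z).symm ▸ smul_mem X r (hx.2 z hz)⟩

theorem NonUnitalAlgebra.adjoin_toSubmodule_mul_le {s : Set R} {P : Submodule F R}
    (h : ∀ z ∈ s, ∀ p ∈ P, z * p ∈ P) : (adjoin F s).toSubmodule * P ≤ P := by
  refine mul_le.2 fun z hz => ?_
  induction hz using NonUnitalAlgebra.adjoin_induction with
  | mem z hz => exact h z hz
  | add x y _ _ hx hy => exact fun p hp => (add_mul x y p).symm ▸ add_mem (hx p hp) (hy p hp)
  | zero => exact fun p _ => (zero_mul p).symm ▸ zero_mem P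
  | mul x y _ _ hx hy => exact fun p hp => (mul_assoc x y p).symm ▸ hx _ (hy p hp)
  | smul r x _ hx => exact fun p hp => (smul_mul_assoc r x p).symm ▸ smul_mem P r (hx p hp)

theorem isNilpotent_adjoin_of_isNilpotent_span {s : Set R} (hs : IsNilpotent (span F s)) :
    IsNilpotent (NonUnitalAlgebra.adjoin F s).toSubmodule := by
  set N := (NonUnitalAlgebra.adjoin F s).toSubmodule
  set M := span F s
  set U := 1 ⊔ N
  have hMN : M ≤ N := span_le.2 (NonUnitalAlgebra.subset_adjoin F)
  have hNN : N * N ≤ N := NonUnitalSubalgebra.toSubmodule_mul_self_le _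
  have hMU : M * U ≤ N := by
    rw [Submodule.mul_sup, mul_one]
    exact sup_le hMN ((mul_le_mul' hMN le_rfl).trans hNN)
  have hM_le : M ≤ M * U := le_mul_one_sup M N
  -- every word in `s` is a letter followed by a (possibly empty) word
  have hN_le : N ≤ M * U :=
    NonUnitalAlgebra.adjoin_toSubmodule_le_of_mul_mem (fun b hb => hM_le (subset_span hb))
      fun b hb x hx => mul_mem_mul (subset_span hb) (mem_sup_right (hMU hx))
  have hUM : U * M ≤ M * U := by
    rw [Submodule.sup_mul, one_mul]
    exact sup_le hM_le (((mul_le_mul' le_rfl hMN).trans hNN).trans hN_le)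
  have hpow : ∀ k, N ^ k ≤ M ^ k * U := by
    intro k
    induction k with
    | zero => simp [U]
    | succ k ih =>
      calc N ^ (k + 1) = N ^ k * N := pow_succ N k
        _ ≤ M ^ k * U * (M * U) := mul_le_mul' ih hN_le
        _ = M ^ k * (U * M) * U := by simp only [mul_assoc]
        _ ≤ M ^ k * (M * U) * U := by gcongr
        _ = M ^ (k + 1) * (U * U) := by simp only [pow_succ, mul_assoc]
        _ ≤ M ^ (k + 1) * U := by gcongr; exact one_sup_mul_self_le hNN
  obtain ⟨r, hr⟩ := hs
  exact ⟨r, le_antisymm ((hpow r).trans_eq (by rw [hr, zero_mul])) bot_le⟩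

theorem isNilpotent_adjoin_singleton {c : R} (hc : IsNilpotent c) :
    IsNilpotent (NonUnitalAlgebra.adjoin F {c}).toSubmodule := by
  obtain ⟨s, hs⟩ := hc
  refine isNilpotent_adjoin_of_isNilpotent_span ⟨s, ?_⟩
  rw [span_pow, Set.singleton_pow, hs, span_singleton_eq_bot.2 rfl, zero_eq_bot]

theorem Submodule.mul_one_sup_mul_self_le {N C : Submodule F R} (hNN : N * N ≤ N)
    (hCP : C * (N * (1 ⊔ C)) ≤ N * (1 ⊔ C)) :
    N * (1 ⊔ C) * (N * (1 ⊔ C)) ≤ N * (1 ⊔ C) :=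
  calc N * (1 ⊔ C) * (N * (1 ⊔ C)) = N * ((1 ⊔ C) * (N * (1 ⊔ C))) := mul_assoc _ _ _
    _ ≤ N * (N * (1 ⊔ C)) := mul_le_mul' le_rfl (one_sup_mul_le hCP)
    _ ≤ N * (1 ⊔ C) := by
      rw [← mul_assoc]
      exact mul_le_mul' hNN le_rfl

theorem Submodule.mul_one_sup_mul_le {N C : Submodule F R} (hCC : C * C ≤ C) :
    N * (1 ⊔ C) * C ≤ N * (1 ⊔ C) := by
  rw [mul_assoc]
  exact mul_le_mul' le_rfl ((mul_le_mul' le_rfl le_sup_right).trans (one_sup_mul_self_le hCC))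

section

variable {P C : Submodule F R}

theorem Submodule.sup_mul_self_le (hPP : P * P ≤ P) (hPC : P * C ≤ P) (hCP : C * P ≤ P)
    (hCC : C * C ≤ C) : (P ⊔ C) * (P ⊔ C) ≤ P ⊔ C := by
  rw [Submodule.sup_mul, Submodule.mul_sup, Submodule.mul_sup]
  exact sup_le (sup_le (le_sup_of_le_left hPP) (le_sup_of_le_left hPC))
    (sup_le (le_sup_of_le_left hCP) (le_sup_of_le_right hCC))

theorem Submodule.sup_pow_le (hPP : P * P ≤ P) (hPC : P * C ≤ P) (hCP : C * P ≤ P) (k : ℕ) :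
    (P ⊔ C) ^ k ≤ P ⊔ C ^ k := by
  have hCpow : ∀ k, C ^ k * P ≤ P := by
    intro k
    induction k with
    | zero => rw [pow_zero, one_mul]
    | succ k ih =>
      calc C ^ (k + 1) * P = C ^ k * (C * P) := by rw [pow_succ, mul_assoc]
        _ ≤ C ^ k * P := mul_le_mul' le_rfl hCP
        _ ≤ P := ih
  induction k with
  | zero => exact le_sup_right
  | succ k ih =>
    calc (P ⊔ C) ^ (k + 1) = (P ⊔ C) ^ k * (P ⊔ C) := pow_succ _ _
      _ ≤ (P ⊔ C ^ k) * (P ⊔ C) := mul_le_mul' ih le_rfl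
      _ = P * P ⊔ P * C ⊔ (C ^ k * P ⊔ C ^ (k + 1)) := by
        rw [Submodule.sup_mul, Submodule.mul_sup, Submodule.mul_sup, pow_succ]
      _ ≤ P ⊔ C ^ (k + 1) :=
        sup_le (sup_le (le_sup_of_le_left hPP) (le_sup_of_le_left hPC))
          (sup_le (le_sup_of_le_left (hCpow k)) le_sup_right)

end

theorem Submodule.isNilpotent_mul_one_sup_sup {N C : Submodule F R} (hN : IsNilpotent N)
    (hC : IsNilpotent C) (hNN : N * N ≤ N) (hCC : C * C ≤ C)
    (hCP : C * (N * (1 ⊔ C)) ≤ N * (1 ⊔ C)) :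
    IsNilpotent (N * (1 ⊔ C) ⊔ C) := by
  set P := N * (1 ⊔ C)
  have hP_pow : ∀ k, P ^ k ≤ N ^ k * (1 ⊔ C) := by
    intro k
    induction k with
    | zero => rw [pow_zero, pow_zero, one_mul]; exact le_sup_left
    | succ k ih =>
      calc P ^ (k + 1) = P ^ k * P := pow_succ _ _
        _ ≤ N ^ k * (1 ⊔ C) * P := mul_le_mul' ih le_rfl
        _ = N ^ k * ((1 ⊔ C) * P) := mul_assoc _ _ _
        _ ≤ N ^ k * P := mul_le_mul' le_rfl (one_sup_mul_le hCP)
        _ = N ^ (k + 1) * (1 ⊔ C) := by rw [pow_succ, mul_assoc]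
  obtain ⟨s, hs⟩ := hC
  obtain ⟨r, hr⟩ := hN
  have hsup_pow := sup_pow_le (mul_one_sup_mul_self_le hNN hCP) (mul_one_sup_mul_le hCC) hCP s
  refine ⟨s * r, le_antisymm ?_ bot_le⟩
  calc (P ⊔ C) ^ (s * r) = ((P ⊔ C) ^ s) ^ r := pow_mul _ _ _
    _ ≤ P ^ r := pow_le_pow_left' (by simpa [hs] using hsup_pow) r
    _ ≤ N ^ r * (1 ⊔ C) := hP_pow r
    _ = 0 := by rw [hr, zero_mul]

theorem Submodule.pow_mul_top_sup_mul_le (E : Submodule F R) (i j : ℕ) :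
    (E ^ i * ⊤ ⊔ ⊤ * E ^ j) * E ≤ E ^ i * ⊤ ⊔ ⊤ * E ^ (j + 1) := by
  rw [Submodule.sup_mul, mul_assoc, mul_assoc, ← pow_succ]
  exact sup_le_sup_right (mul_le_mul' le_rfl le_top) _

theorem Submodule.mul_pow_mul_top_sup_le (E : Submodule F R) (i j : ℕ) :
    E * (E ^ i * ⊤ ⊔ ⊤ * E ^ j) ≤ E ^ (i + 1) * ⊤ ⊔ ⊤ * E ^ j := by
  rw [Submodule.mul_sup, ← mul_assoc, ← mul_assoc, ← pow_succ']
  exact sup_le_sup_left (mul_le_mul' le_top le_rfl) _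

theorem Set.eq_empty_of_forall_exists_mul_add_smul_mul_mem {E : Submodule F R}
    (hE : IsNilpotent E) {T : Set R} (hT0 : (0 : R) ∉ T)
    (hT : ∀ x ∈ T, ∃ e ∈ E, ∃ γ : F, x * e + γ • (e * x) ∈ T) : T = ∅ := by
  refine Set.eq_empty_of_forall_notMem fun a ha => ?_
  have key : ∀ n, ∃ x ∈ T, ∀ i j, i + j = n + 1 → x ∈ E ^ i * ⊤ ⊔ ⊤ * E ^ j := by
    intro n
    induction n with
    | zero =>
      refine ⟨a, ha, fun i j hij => ?_⟩
      obtain rfl | rfl : i = 0 ∨ j = 0 := by omega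
      · exact mem_sup_left (by simp)
      · exact mem_sup_right (by simp)
    | succ n ih =>
      obtain ⟨x, hxT, hx⟩ := ih
      obtain ⟨e, he, γ, hy⟩ := hT x hxT
      refine ⟨_, hy, fun i j hij => add_mem ?_ (smul_mem _ γ ?_)⟩
      · obtain rfl | ⟨j, rfl⟩ : j = 0 ∨ ∃ j', j = j' + 1 := by cases j <;> simp
        · exact mem_sup_right (by simp)
        · exact pow_mul_top_sup_mul_le E i j (Submodule.mul_mem_mul (hx i j (by omega)) he)
      · obtain rfl | ⟨i, rfl⟩ : i = 0 ∨ ∃ i', i = i' + 1 := by cases i <;> simp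
        · exact mem_sup_left (by simp)
        · exact mul_pow_mul_top_sup_le E i j (Submodule.mul_mem_mul he (hx i j (by omega)))
  obtain ⟨r, hr⟩ := hE
  obtain ⟨x, hxT, hx⟩ := key (r + r)
  have hx0 := hx r (r + 1) (by omega)
  simp only [pow_succ, hr, zero_eq_bot, Submodule.bot_mul, Submodule.mul_bot, sup_idem,
    mem_bot] at hx0
  exact hT0 (hx0 ▸ hxT)

end Semiring

section Ring

open Submodule

variable {F R : Type*} [CommRing F] [Ring R] [Algebra F R]

variable (F) in
def IsWeaklyClosed (D : Set R) : Prop :=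
  ∀ a ∈ D, ∀ b ∈ D, ∃ γ : F, a * b + γ • (b * a) ∈ D

-- `hrel` says `c b ≡ -γ b c` modulo the algebra generated by `B`, so `c` can be moved to the
-- right through a word in `B`, one letter at a time.
theorem mul_mem_adjoin_mul_one_sup_adjoin_singleton {B : Set R} {c : R}
    (hrel : ∀ b ∈ B, ∃ γ : F, c * b + γ • (b * c) ∈ NonUnitalAlgebra.adjoin F B) {x : R}
    (hx : x ∈ NonUnitalAlgebra.adjoin F B) :
    c * x ∈ (NonUnitalAlgebra.adjoin F B).toSubmodule *
      (1 ⊔ (NonUnitalAlgebra.adjoin F {c}).toSubmodule) := by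
  set N := (NonUnitalAlgebra.adjoin F B).toSubmodule
  set P := N * (1 ⊔ (NonUnitalAlgebra.adjoin F {c}).toSubmodule)
  have hN_le : N ≤ P := le_mul_one_sup _ _
  have hNP : N * P ≤ P := by
    rw [← mul_assoc]
    exact mul_le_mul' (NonUnitalSubalgebra.toSubmodule_mul_self_le _) le_rfl
  have hbc : ∀ b ∈ B, b * c ∈ P := fun b hb =>
    Submodule.mul_mem_mul (NonUnitalAlgebra.subset_adjoin F hb)
      (mem_sup_right (NonUnitalAlgebra.subset_adjoin F rfl))
  have : N ≤ N ⊓ P.comap (LinearMap.mulLeft F c) := by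
    refine NonUnitalAlgebra.adjoin_toSubmodule_le_of_mul_mem
      (fun b hb => ⟨NonUnitalAlgebra.subset_adjoin F hb, ?_⟩)
      (fun b hb y hy => ⟨mul_mem (s := NonUnitalAlgebra.adjoin F B)
        (NonUnitalAlgebra.subset_adjoin F hb) hy.1, ?_⟩)
    · obtain ⟨γ, hγ⟩ := hrel b hb
      have : c * b = (c * b + γ • (b * c)) - γ • (b * c) := (add_sub_cancel_right _ _).symm
      change c * b ∈ P
      rw [this]
      exact sub_mem (hN_le hγ) (smul_mem _ γ (hbc b hb))
    · obtain ⟨γ, hγ⟩ := hrel b hb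
      have : c * (b * y) = (c * b + γ • (b * c)) * y - γ • (b * (c * y)) := by
        simp only [add_mul, smul_mul_assoc, mul_assoc, add_sub_cancel_right]
      change c * (b * y) ∈ P
      rw [this]
      exact sub_mem (hN_le (mul_mem (s := NonUnitalAlgebra.adjoin F B) hγ hy.1))
        (smul_mem _ γ (hNP (Submodule.mul_mem_mul (NonUnitalAlgebra.subset_adjoin F hb) hy.2)))
  exact (this hx).2

theorem adjoin_singleton_mul_adjoin_mul_le {B : Set R} {c : R}
    (hrel : ∀ b ∈ B, ∃ γ : F, c * b + γ • (b * c) ∈ NonUnitalAlgebra.adjoin F B) :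
    (NonUnitalAlgebra.adjoin F {c}).toSubmodule *
        ((NonUnitalAlgebra.adjoin F B).toSubmodule *
          (1 ⊔ (NonUnitalAlgebra.adjoin F {c}).toSubmodule)) ≤
      (NonUnitalAlgebra.adjoin F B).toSubmodule *
        (1 ⊔ (NonUnitalAlgebra.adjoin F {c}).toSubmodule) := by
  set C := (NonUnitalAlgebra.adjoin F {c}).toSubmodule
  set P := (NonUnitalAlgebra.adjoin F B).toSubmodule * (1 ⊔ C)
  have hPA : P * (1 ⊔ C) ≤ P := by
    rw [mul_assoc]
    exact mul_le_mul' le_rfl (one_sup_mul_self_le (NonUnitalSubalgebra.toSubmodule_mul_self_le _))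
  have hcP : ∀ p ∈ P, c * p ∈ P := fun p hp =>
    Submodule.mul_induction_on hp
      (fun n hn a ha => (mul_assoc c n a) ▸
        hPA (Submodule.mul_mem_mul (mul_mem_adjoin_mul_one_sup_adjoin_singleton hrel hn) ha))
      (fun x y hx hy => (mul_add c x y).symm ▸ add_mem hx hy)
  exact NonUnitalAlgebra.adjoin_toSubmodule_mul_le fun z hz => (Set.mem_singleton_iff.1 hz) ▸ hcP

theorem isNilpotent_adjoin_insert {B : Set R} {c : R}
    (hB : IsNilpotent (NonUnitalAlgebra.adjoin F B).toSubmodule) (hc : IsNilpotent c)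
    (hrel : ∀ b ∈ B, ∃ γ : F, c * b + γ • (b * c) ∈ NonUnitalAlgebra.adjoin F B) :
    IsNilpotent (NonUnitalAlgebra.adjoin F (insert c B)).toSubmodule := by
  set N := (NonUnitalAlgebra.adjoin F B).toSubmodule
  set C := (NonUnitalAlgebra.adjoin F {c}).toSubmodule
  have hNN : N * N ≤ N := NonUnitalSubalgebra.toSubmodule_mul_self_le _
  have hCC : C * C ≤ C := NonUnitalSubalgebra.toSubmodule_mul_self_le _
  have hCP := adjoin_singleton_mul_adjoin_mul_le hrel
  refine isNilpotent_of_le ?_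
    (isNilpotent_mul_one_sup_sup hB (isNilpotent_adjoin_singleton hc) hNN hCC hCP)
  have hsub : insert c B ⊆ ((N * (1 ⊔ C) ⊔ C : Submodule F R) : Set R) :=
    Set.insert_subset (mem_sup_right (NonUnitalAlgebra.subset_adjoin F rfl))
      fun b hb => mem_sup_left (le_mul_one_sup N C (NonUnitalAlgebra.subset_adjoin F hb))
  exact NonUnitalAlgebra.adjoin_toSubmodule_le_of_mul_mem hsub fun b hb x hx =>
    sup_mul_self_le (mul_one_sup_mul_self_le hNN hCP) (mul_one_sup_mul_le hCC) hCP hCC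
      (Submodule.mul_mem_mul (hsub hb) hx)

theorem isNilpotent_adjoin_of_isWeaklyClosed [IsNoetherian F R] {D : Set R}
    (hwc : IsWeaklyClosed F D) (hnil : ∀ a ∈ D, IsNilpotent a) :
    IsNilpotent (NonUnitalAlgebra.adjoin F D).toSubmodule := by
  obtain ⟨_, ⟨B, hBD, rfl, hB⟩, hmax⟩ := set_has_maximal_iff_noetherian.2 ‹_›
    {N | ∃ B ⊆ D, N = (NonUnitalAlgebra.adjoin F B).toSubmodule ∧ IsNilpotent N}
    ⟨_, ∅, Set.empty_subset D, rfl, isNilpotent_adjoin_of_isNilpotent_span ⟨1, by simp⟩⟩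
  set E := NonUnitalAlgebra.adjoin F B
  suffices hDE : D ⊆ E from
    isNilpotent_of_le (NonUnitalAlgebra.adjoin_le hDE) hB
  by_contra hDE
  by_cases hext : ∃ c ∈ D, c ∉ E ∧ ∀ b ∈ B, ∃ γ : F, c * b + γ • (b * c) ∈ E
  · obtain ⟨c, hcD, hcE, hrel⟩ := hext
    refine hmax _ ⟨insert c B, Set.insert_subset hcD hBD, rfl,
      isNilpotent_adjoin_insert hB (hnil c hcD) hrel⟩ ?_
    exact SetLike.lt_iff_le_and_exists.2 ⟨NonUnitalAlgebra.adjoin_mono (Set.subset_insert c B),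
      c, NonUnitalAlgebra.subset_adjoin F (Set.mem_insert c B), hcE⟩
  · push Not at hext
    refine hDE (Set.sdiff_eq_empty.1 (Set.eq_empty_of_forall_exists_mul_add_smul_mul_mem hB
      (fun h => h.2 (zero_mem E)) fun x hx => ?_))
    obtain ⟨b, hb, hbE⟩ := hext x hx.1 hx.2
    obtain ⟨γ, hγ⟩ := hwc x hx.1 b (hBD hb)
    exact ⟨b, NonUnitalAlgebra.subset_adjoin F hb, γ, hγ, hbE γ⟩

end Ring

theorem jacobson_weakly_closed_general {F V : Type*} [Field F] [AddCommGroup V] [Module F V]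
    [FiniteDimensional F V]
    (D : Set (Module.End F V))
    (hwc : ∀ a ∈ D, ∀ b ∈ D, ∃ γ : F, a * b + γ • (b * a) ∈ D)
    (hnil : ∀ a ∈ D, IsNilpotent a) :
    ∃ n : ℕ, 0 < n ∧ ∀ l : List (Module.End F V), l.length = n →
      (∀ x ∈ l, x ∈ NonUnitalAlgebra.adjoin F D) → l.prod = 0 := by
  obtain ⟨r, hr⟩ := isNilpotent_adjoin_of_isWeaklyClosed hwc hnil
  refine ⟨r + 1, r.succ_pos, fun l hl hmem => ?_⟩
  have hprod := Submodule.list_prod_mem_pow (M := (NonUnitalAlgebra.adjoin F D).toSubmodule) hmem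
  rw [hl, pow_succ, hr, zero_mul, Submodule.zero_eq_bot, Submodule.mem_bot] at hprod
  exact hprod

/-- Jacobson: a weakly closed set of nilpotent linear transformations
of a finite-dimensional vector space generates a nilpotent non-unital associative
algebra. -/
theorem jacobson_weakly_closed {F V : Type*} [Field F] [AddCommGroup V] [Module F V]
    [FiniteDimensional F V]
    (𝔘 : Subalgebra F (Module.End F V)) (D : Set (Module.End F V)) (hD : D ⊆ 𝔘)
    (hwc : ∀ a ∈ D, ∀ b ∈ D, ∃ γ : F, a * b + γ • (b * a) ∈ D)
    (hnil : ∀ a ∈ D, IsNilpotent a) :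
    ∃ n : ℕ, 0 < n ∧ ∀ l : List (Module.End F V), l.length = n →
      (∀ x ∈ l, x ∈ NonUnitalAlgebra.adjoin F D) → l.prod = 0 :=
  jacobson_weakly_closed_general D hwc hnil
end

section
/- (Engel's theorem for Lie superalgebras) Let L = L₀ ⊕ L₁ be a finite-dimensional Lie superalgebra over a field of characteristic ≠ 2 such that ad x is a nilpotent linear transformation of L for every homogeneous element x ∈ L₀ ∪ L₁. Then L is nilpotent. -/
/-!
Call `v` central modulo `Z` if `(y, v) ∈ Z` for all `y`. The heart of the proof: if `Z ≠ L` is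
stable under every `ad y`, some `v ∉ Z` is central modulo `Z`. Engel's theorem for the Lie
algebra `ad L₀` acting on `L` yields a filtration `Cⱼ` of `L` with `(L₀, Cⱼ) ⊆ Cⱼ₊₁` ending
in `0`, hence a `v ∉ Z` with `(L₀, v) ⊆ Z`. The odd part is then absorbed along
`Cⱼ ∩ L₁` from the deep end, one odd element `u` at a time: replace `v` by the last
`(ad u)ᵏ v ∉ Z`; since `(L₀, u)` lies in the part already absorbed and `(L₁, u) ⊆ L₀`, the
super-Jacobi identity keeps `v` killed by what was absorbed before.

So the upper central series `0 = Z₀ ⊆ Z₁ ⊆ ⋯`, `Zₙ₊₁ = {v | (L, v) ⊆ Zₙ}`, which stabilizes by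
finite dimension, reaches `L`. Its terms are graded, so super-anticommutativity gives
`(Zₙ₊₁, L) ⊆ Zₙ`, and `γⱼ₊₁ ⊆ Z_{n-j}` by induction.
-/

theorem exists_pow_apply_notMem_and_apply_mem {R M : Type*} [CommRing R] [AddCommGroup M]
    [Module R M] {f : Module.End R M} (hf : IsNilpotent f) {Z : Submodule R M} {v : M}
    (hv : v ∉ Z) : ∃ k, (f ^ k) v ∉ Z ∧ f ((f ^ k) v) ∈ Z := by
  obtain ⟨n, hn⟩ := hf
  obtain ⟨k, hk, hk_succ⟩ := Nat.exists_not_and_succ_of_not_zero_of_exists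
    (p := fun k => (f ^ k) v ∈ Z) (by simpa using hv) ⟨n, by simp [hn]⟩
  exact ⟨k, hk, by rwa [pow_succ', Module.End.mul_apply] at hk_succ⟩

namespace LieSuperStruct

variable {F L : Type*} [Field F] [AddCommGroup L] [Module F L] (S : LieSuperStruct F L)

theorem eq_top_of_L0_le_of_L1_le {P : Submodule F L} (h0 : S.L0 ≤ P) (h1 : S.L1 ≤ P) :
    P = ⊤ :=
  top_le_iff.mp (S.compl.sup_eq_top ▸ sup_le h0 h1)

theorem isHomogeneous_iff {A : Submodule F L} :
    S.IsHomogeneous A ↔ ∀ a ∈ S.L0, ∀ b ∈ S.L1, a + b ∈ A → a ∈ A ∧ b ∈ A := by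
  constructor
  · intro hA a ha b hb hab
    rw [hA] at hab
    obtain ⟨a', ⟨ha'A, ha'⟩, b', ⟨hb'A, hb'⟩, hsum⟩ := Submodule.mem_sup.mp hab
    have hdiff : a - a' ∈ S.L0 ⊓ S.L1 :=
      ⟨S.L0.sub_mem ha ha', by
        rw [show a - a' = b' - b by rw [sub_eq_sub_iff_add_eq_add, ← hsum, add_comm]]
        exact S.L1.sub_mem hb' hb⟩
    obtain rfl : a = a' := sub_eq_zero.mp (by simpa [S.compl.inf_eq_bot] using hdiff)
    exact ⟨ha'A, add_left_cancel hsum ▸ hb'A⟩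
  · intro hA
    refine le_antisymm (fun v hv => ?_) (sup_le inf_le_left inf_le_left)
    obtain ⟨a, b, ha, hb, rfl⟩ := Submodule.codisjoint_iff_exists_add_eq.mp S.compl.codisjoint v
    obtain ⟨haA, hbA⟩ := hA a ha b hb hv
    exact Submodule.add_mem_sup ⟨haA, ha⟩ ⟨hbA, hb⟩

attribute [local instance] LieRing.ofAssociativeRing

/-- Engel's theorem for Lie algebras is applied to `L` as a module over this Lie subalgebra
of `End L`, so `L₀` never has to be made a Lie algebra itself. -/
def adEven : LieSubalgebra F (Module.End F L) where
  toSubmodule := S.L0.map S.bracket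
  lie_mem' := by
    rintro _ _ ⟨x, hx, rfl⟩ ⟨y, hy, rfl⟩
    refine ⟨S.bracket x y, S.grade00 x hx y hy, ?_⟩
    ext z
    simp [Ring.lie_def, S.jacobi_even x hx y z]

theorem bracket_mem_lowerCentralSeries_succ {x m : L} (hx : x ∈ S.L0) {j : ℕ}
    (hm : m ∈ LieModule.lowerCentralSeries F S.adEven L j) :
    S.bracket x m ∈ LieModule.lowerCentralSeries F S.adEven L (j + 1) := by
  rw [LieModule.lowerCentralSeries_succ]
  exact LieSubmodule.lie_mem_lie
    (LieSubmodule.mem_top (⟨S.bracket x, x, hx, rfl⟩ : S.adEven)) hm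

theorem exists_lowerCentralSeries_adEven_eq_bot [FiniteDimensional F L]
    (h : ∀ x ∈ S.L0, _root_.IsNilpotent (S.ad x)) :
    ∃ r, LieModule.lowerCentralSeries F S.adEven L r = ⊥ := by
  rw [← LieModule.isNilpotent_iff F, LieModule.isNilpotent_iff_forall' (R := F)]
  rintro ⟨_, x, hx, rfl⟩
  exact h x hx

def transporter (T Z : Submodule F L) : Submodule F L where
  carrier := {v | ∀ t ∈ T, S.bracket t v ∈ Z}
  add_mem' ha hb t ht := by rw [map_add]; exact Z.add_mem (ha t ht) (hb t ht)
  zero_mem' t _ := by rw [map_zero]; exact Z.zero_mem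
  smul_mem' c v hv t ht := by rw [map_smul]; exact Z.smul_mem c (hv t ht)

variable {S}

theorem mem_transporter {T Z : Submodule F L} {v : L} :
    v ∈ S.transporter T Z ↔ ∀ t ∈ T, S.bracket t v ∈ Z := Iff.rfl

theorem mem_transporter_iff_le_comap {T Z : Submodule F L} {v : L} :
    v ∈ S.transporter T Z ↔ T ≤ Z.comap (S.bracket.flip v) := Iff.rfl

theorem transporter_anti {T T' Z : Submodule F L} (hT : T ≤ T') :
    S.transporter T' Z ≤ S.transporter T Z :=
  fun _ hv t ht => hv t (hT ht)

theorem transporter_mono {T Z Z' : Submodule F L} (hZ : Z ≤ Z') :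
    S.transporter T Z ≤ S.transporter T Z' :=
  fun _ hv t ht => hZ (hv t ht)

theorem transporter_sup (T T' Z : Submodule F L) :
    S.transporter (T ⊔ T') Z = S.transporter T Z ⊓ S.transporter T' Z := by
  ext v
  simp only [Submodule.mem_inf, mem_transporter_iff_le_comap, sup_le_iff]

theorem mem_transporter_span_singleton {Z : Submodule F L} {u v : L} :
    v ∈ S.transporter (Submodule.span F {u}) Z ↔ S.bracket u v ∈ Z := by
  rw [mem_transporter_iff_le_comap, Submodule.span_singleton_le_iff_mem]
  rfl

theorem mem_transporter_top {Z : Submodule F L} {v : L} :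
    v ∈ S.transporter ⊤ Z ↔ ∀ y, y ∈ S.L0 ∨ y ∈ S.L1 → S.bracket y v ∈ Z := by
  rw [← S.compl.sup_eq_top, transporter_sup, Submodule.mem_inf, mem_transporter,
    mem_transporter]
  grind

theorem exists_notMem_transporter_L0 [FiniteDimensional F L]
    (h : ∀ x ∈ S.L0, _root_.IsNilpotent (S.ad x)) {Z : Submodule F L} (hZ : Z ≠ ⊤) :
    ∃ v ∉ Z, v ∈ S.transporter S.L0 Z := by
  obtain ⟨r, hr⟩ := S.exists_lowerCentralSeries_adEven_eq_bot h
  obtain ⟨j, hj, hj_succ⟩ := Nat.exists_not_and_succ_of_not_zero_of_exists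
    (p := fun j => (LieModule.lowerCentralSeries F S.adEven L j : Submodule F L) ≤ Z)
    (by simpa using hZ) ⟨r, by simp [hr]⟩
  obtain ⟨v, hv, hvZ⟩ := SetLike.not_le_iff_exists.mp hj
  exact ⟨v, hvZ, fun x hx => hj_succ (S.bracket_mem_lowerCentralSeries_succ hx hv)⟩

section OddPart

variable {Z N : Submodule F L} (hZ : ∀ y, ∀ w ∈ Z, S.bracket y w ∈ Z) (hN : N ≤ S.L1)
include hZ hN

theorem bracket_mem_transporter_L0_sup {u : L} (hu : u ∈ S.L1)
    (huN : ∀ x ∈ S.L0, S.bracket x u ∈ N) {w : L} (hw : w ∈ S.transporter (S.L0 ⊔ N) Z) :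
    S.bracket u w ∈ S.transporter (S.L0 ⊔ N) Z := by
  rw [transporter_sup] at hw ⊢
  obtain ⟨hw0, hwN⟩ := hw
  constructor
  · intro x hx
    rw [S.jacobi_even x hx u w]
    exact Z.add_mem (hwN _ (huN x hx)) (hZ u _ (hw0 x hx))
  · intro m hm
    rw [S.jacobi_odd_odd m (hN hm) u hu w]
    exact Z.sub_mem (hw0 _ (S.grade11 m (hN hm) u hu)) (hZ u _ (hwN m hm))

theorem exists_notMem_transporter_sup_span_singleton {u : L} (hu : u ∈ S.L1)
    (hu_nil : _root_.IsNilpotent (S.ad u)) (huN : ∀ x ∈ S.L0, S.bracket x u ∈ N)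
    (hN_ex : ∃ v ∉ Z, v ∈ S.transporter (S.L0 ⊔ N) Z) :
    ∃ v ∉ Z, v ∈ S.transporter (S.L0 ⊔ (N ⊔ Submodule.span F {u})) Z := by
  obtain ⟨v, hvZ, hv⟩ := hN_ex
  obtain ⟨k, hk, hk_succ⟩ := exists_pow_apply_notMem_and_apply_mem hu_nil hvZ
  refine ⟨_, hk, ?_⟩
  rw [← sup_assoc, transporter_sup, Submodule.mem_inf, mem_transporter_span_singleton]
  exact ⟨Module.End.pow_apply_mem_of_forall_mem k
    (fun w hw => bracket_mem_transporter_L0_sup hZ hN hu huN hw) v hv, hk_succ⟩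

theorem exists_notMem_transporter_of_bracket_le [FiniteDimensional F L]
    (h : ∀ u ∈ S.L1, _root_.IsNilpotent (S.ad u)) {N' : Submodule F L} (hN' : N' ≤ S.L1)
    (hNN' : ∀ x ∈ S.L0, ∀ u ∈ N', S.bracket x u ∈ N)
    (hN_ex : ∃ v ∉ Z, v ∈ S.transporter (S.L0 ⊔ N) Z) :
    ∃ v ∉ Z, v ∈ S.transporter (S.L0 ⊔ N') Z := by
  classical
  obtain ⟨s, rfl⟩ := IsNoetherian.noetherian N'
  suffices ∀ t ⊆ s, ∃ v ∉ Z, v ∈ S.transporter (S.L0 ⊔ (N ⊔ Submodule.span F t)) Z by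
    obtain ⟨v, hvZ, hv⟩ := this s subset_rfl
    exact ⟨v, hvZ, transporter_anti (sup_le_sup_left le_sup_right _) hv⟩
  intro t hts
  induction t using Finset.induction_on with
  | empty => simpa using hN_ex
  | insert u t _ ih =>
    have hu : u ∈ Submodule.span F s := Submodule.subset_span (hts (Finset.mem_insert_self u t))
    have ht : Submodule.span F t ≤ S.L1 :=
      (Submodule.span_mono (by simpa using (Finset.insert_subset_iff.mp hts).2)).trans hN'
    rw [Finset.coe_insert, Submodule.span_insert, sup_comm (Submodule.span F {u}),
      ← sup_assoc N]
    exact exists_notMem_transporter_sup_span_singleton hZ (sup_le hN ht) (hN' hu) (h u (hN' hu))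
      (fun x hx => Submodule.mem_sup_left (hNN' x hx u hu))
      (ih ((Finset.subset_insert u t).trans hts))

end OddPart

theorem exists_notMem_transporter_top [FiniteDimensional F L]
    (h : ∀ x : L, x ∈ S.L0 ∨ x ∈ S.L1 → _root_.IsNilpotent (S.ad x)) {Z : Submodule F L}
    (hZ : ∀ y, ∀ w ∈ Z, S.bracket y w ∈ Z) (hZ_top : Z ≠ ⊤) :
    ∃ v ∉ Z, v ∈ S.transporter ⊤ Z := by
  set C : ℕ → Submodule F L := fun j => LieModule.lowerCentralSeries F S.adEven L j
  obtain ⟨r, hr⟩ := S.exists_lowerCentralSeries_adEven_eq_bot fun x hx => h x (.inl hx)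
  have key : ∀ i ≤ r, ∃ v ∉ Z, v ∈ S.transporter (S.L0 ⊔ (C (r - i) ⊓ S.L1)) Z := by
    intro i hi
    induction i with
    | zero =>
      obtain ⟨v, hvZ, hv⟩ := exists_notMem_transporter_L0 (fun x hx => h x (.inl hx)) hZ_top
      exact ⟨v, hvZ, by simpa [C, hr] using hv⟩
    | succ i ih =>
      refine exists_notMem_transporter_of_bracket_le hZ inf_le_right
        (fun u hu => h u (.inr hu)) inf_le_right ?_ (ih (by omega))
      rintro x hx u ⟨huC, hu⟩
      refine ⟨?_, S.grade01 x hx u hu⟩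
      rw [show r - i = r - (i + 1) + 1 by omega]
      exact S.bracket_mem_lowerCentralSeries_succ hx huC
  simpa [C, S.compl.sup_eq_top] using key r le_rfl

variable (S)

def ucs : ℕ → Submodule F L
  | 0 => ⊥
  | n + 1 => S.transporter ⊤ (ucs n)

theorem ucs_le_ucs_succ : ∀ n, S.ucs n ≤ S.ucs (n + 1)
  | 0 => bot_le
  | n + 1 => transporter_mono (ucs_le_ucs_succ n)

theorem bracket_mem_ucs {n : ℕ} (y : L) {v : L} (hv : v ∈ S.ucs n) : S.bracket y v ∈ S.ucs n := by
  cases n with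
  | zero => simp_all [ucs]
  | succ n => exact S.ucs_le_ucs_succ n (hv y trivial)

theorem exists_ucs_eq_top [FiniteDimensional F L]
    (h : ∀ x : L, x ∈ S.L0 ∨ x ∈ S.L1 → _root_.IsNilpotent (S.ad x)) : ∃ n, S.ucs n = ⊤ := by
  obtain ⟨n, hn⟩ := monotone_stabilizes_iff_noetherian.mpr inferInstance
    ⟨S.ucs, monotone_nat_of_le_succ S.ucs_le_ucs_succ⟩
  refine ⟨n, by_contra fun hn_top => ?_⟩
  obtain ⟨v, hvZ, hv⟩ := exists_notMem_transporter_top h (fun y _ => S.bracket_mem_ucs y) hn_top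
  have hn_succ : S.ucs n = S.ucs (n + 1) := hn (n + 1) n.le_succ
  exact hvZ (hn_succ ▸ hv)

theorem isHomogeneous_ucs : ∀ n, S.IsHomogeneous (S.ucs n)
  | 0 => by simp [IsHomogeneous, ucs]
  | n + 1 => by
    have ih := S.isHomogeneous_iff.mp (isHomogeneous_ucs n)
    refine S.isHomogeneous_iff.mpr fun a ha b hb hab => ?_
    have hab_y : ∀ y, y ∈ S.L0 ∨ y ∈ S.L1 →
        S.bracket y a ∈ S.ucs n ∧ S.bracket y b ∈ S.ucs n := by
      have hab' := mem_transporter_top.mp hab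
      rintro y (hy | hy)
      · exact ih _ (S.grade00 y hy a ha) _ (S.grade01 y hy b hb) (map_add (S.bracket y) a b ▸
          hab' y (.inl hy))
      · refine (ih _ (S.grade11 y hy b hb) _ (S.grade10 y hy a ha) ?_).symm
        rw [add_comm, ← map_add]
        exact hab' y (.inr hy)
    exact ⟨mem_transporter_top.mpr fun y hy => (hab_y y hy).1,
      mem_transporter_top.mpr fun y hy => (hab_y y hy).2⟩

theorem bracket_mem_ucs_of_mem_ucs_succ {n : ℕ} {a : L} (ha : a ∈ S.ucs (n + 1)) (y : L) :
    S.bracket a y ∈ S.ucs n := by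
  rw [S.isHomogeneous_ucs (n + 1)] at ha
  obtain ⟨a₀, ⟨ha₀, ha₀_even⟩, a₁, ⟨ha₁, ha₁_odd⟩, rfl⟩ := Submodule.mem_sup.mp ha
  have h_odd : (S.ucs n).comap (S.bracket a₁) = ⊤ := by
    refine S.eq_top_of_L0_le_of_L1_le (fun y hy => ?_) (fun y hy => ?_)
    · rw [Submodule.mem_comap, ← neg_neg (S.bracket a₁ y), ← S.anti_even y hy]
      exact neg_mem (ha₁ y trivial)
    · rw [Submodule.mem_comap, S.anti_odd a₁ ha₁_odd y hy]
      exact ha₁ y trivial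
  rw [map_add, LinearMap.add_apply, S.anti_even a₀ ha₀_even y]
  exact add_mem (neg_mem (ha₀ y trivial))
    (show y ∈ (S.ucs n).comap (S.bracket a₁) from h_odd ▸ Submodule.mem_top)

theorem lcs_le_ucs_sub {n : ℕ} (hn : S.ucs n = ⊤) : ∀ j ≤ n, S.lcs j ≤ S.ucs (n - j)
  | 0, _ => by simp [hn]
  | j + 1, hj => by
    have ih := lcs_le_ucs_sub hn j (by omega)
    rw [show n - j = n - (j + 1) + 1 by omega] at ih
    change S.bracketSpan (S.lcs j) ⊤ ≤ _
    refine Submodule.span_le.mpr ?_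
    rintro _ ⟨a, ha, y, -, rfl⟩
    exact S.bracket_mem_ucs_of_mem_ucs_succ (ih ha) y

end LieSuperStruct

theorem engel_superalgebra_general {F L : Type*} [Field F] [AddCommGroup L] [Module F L]
    [FiniteDimensional F L] (S : LieSuperStruct F L)
    (h : ∀ x : L, x ∈ S.L0 ∨ x ∈ S.L1 → IsNilpotent (S.ad x)) :
    S.IsNilpotent := by
  obtain ⟨n, hn⟩ := S.exists_ucs_eq_top h
  exact ⟨n, le_bot_iff.mp (by simpa [LieSuperStruct.ucs] using S.lcs_le_ucs_sub hn n le_rfl)⟩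

/-- Engel's theorem for Lie superalgebras. -/
theorem engel_superalgebra {F L : Type*} [Field F] [AddCommGroup L] [Module F L]
    [FiniteDimensional F L] (hchar : ringChar F ≠ 2) (S : LieSuperStruct F L)
    (h : ∀ x : L, x ∈ S.L0 ∨ x ∈ S.L1 → IsNilpotent (S.ad x)) :
    S.IsNilpotent :=
  engel_superalgebra_general S h
end

section
/- Let L = L₀ ⊕ L₁ be a Lie superalgebra over a field of characteristic p ≥ 3 such that (L₁,L₁) = 0, (L₀,L₀) = 0, ad x is nilpotent on L for every x ∈ L₀, and L contains a homogeneous ideal A of finite codimension with A' = (A,A) finite-dimensional. Then L is nilpotent. -/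
open scoped Pointwise

-- For `s : Set (Module.End R V)`, `(s • ·)^[n] N` is the span of all `f₁ (⋯ (fₙ x))` with
-- `fᵢ ∈ s` and `x ∈ N`.

namespace Submodule

section CommSemiring

variable {R V : Type*} [CommSemiring R] [AddCommMonoid V] [Module R V]
  {s t : Set (Module.End R V)}

theorem set_smul_sup (s : Set (Module.End R V)) (N N' : Submodule R V) :
    s • (N ⊔ N') = s • N ⊔ s • N' := by
  refine le_antisymm (set_smul_le _ _ _ fun f x hf hx ↦ ?_)
    (sup_le (smul_mono_right _ le_sup_left) (smul_mono_right _ le_sup_right))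
  obtain ⟨y, hy, y', hy', rfl⟩ := mem_sup.1 hx
  rw [smul_add]
  exact add_mem_sup (mem_set_smul_of_mem_mem hf hy) (mem_set_smul_of_mem_mem hf hy')

theorem iterate_set_smul_sup (n : ℕ) (N N' : Submodule R V) :
    (s • ·)^[n] (N ⊔ N') = (s • ·)^[n] N ⊔ (s • ·)^[n] N' := by
  induction n generalizing N N' with
  | zero => rfl
  | succ n ih => simp only [Function.iterate_succ_apply, set_smul_sup, ih]

theorem iterate_set_smul_bot (n : ℕ) : (s • ·)^[n] (⊥ : Submodule R V) = ⊥ :=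
  Function.iterate_fixed (set_smul_bot s) n

theorem set_smul_set_smul_le_of_commute (hst : ∀ f ∈ s, ∀ g ∈ t, Commute f g)
    (N : Submodule R V) : s • t • N ≤ t • s • N := by
  refine set_smul_le _ _ _ fun f x hf hx ↦ ?_
  suffices t • N ≤ (t • s • N).comap f from this hx
  refine set_smul_le _ _ _ fun g y hg hy ↦ ?_
  rw [mem_comap, ← Module.End.smul_def, smul_smul, (hst f hf g hg).eq, ← smul_smul]
  exact mem_set_smul_of_mem_mem hg (mem_set_smul_of_mem_mem hf hy)

theorem commute_set_smul_of_commute (hst : ∀ f ∈ s, ∀ g ∈ t, Commute f g) :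
    Function.Commute (s • · : Submodule R V → _) (t • ·) := fun N ↦
  le_antisymm (set_smul_set_smul_le_of_commute hst N)
    (set_smul_set_smul_le_of_commute (fun g hg f hf ↦ (hst f hf g hg).symm) N)

theorem span_set_smul_le (s : Set (Module.End R V)) (N : Submodule R V) :
    (span R s : Set (Module.End R V)) • N ≤ s • N := by
  refine set_smul_le _ _ _ fun f x hf hx ↦ ?_
  suffices span R s ≤ (s • N).comap (LinearMap.applyₗ x) from this hf
  exact span_le.2 fun g hg ↦ mem_set_smul_of_mem_mem hg hx

theorem iterate_singleton_set_smul (f : Module.End R V) (n : ℕ) (N : Submodule R V) :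
    (({f} : Set (Module.End R V)) • ·)^[n] N = f ^ n • N := by
  induction n with
  | zero => simp
  | succ n ih => rw [Function.iterate_succ_apply', ih, singleton_set_smul, pow_succ', mul_smul]

theorem iterate_union_set_smul_eq_bot (hst : ∀ f ∈ s, ∀ g ∈ t, Commute f g) {a b : ℕ}
    {N : Submodule R V} (ha : (s • ·)^[a] N = ⊥) (hb : (t • ·)^[b] N = ⊥) :
    ((s ∪ t) • ·)^[a + b] N = ⊥ := by
  have hcomm := commute_set_smul_of_commute hst
  induction a generalizing N b with
  | zero => rw [show N = ⊥ from ha]; exact iterate_set_smul_bot _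
  | succ a iha =>
    induction b generalizing N with
    | zero => rw [show N = ⊥ from hb]; exact iterate_set_smul_bot _
    | succ b ihb =>
      rw [show a + 1 + (b + 1) = a + (b + 1) + 1 by ring, Function.iterate_succ_apply,
        show (s ∪ t) • N = s • N ⊔ t • N from sup_set_smul N s t, iterate_set_smul_sup,
        sup_eq_bot_iff]
      constructor
      · refine iha ?_ ?_
        · rwa [← Function.iterate_succ_apply]
        · rw [← (hcomm.iterate_right _).eq, hb, set_smul_bot]
      · rw [show a + (b + 1) = a + 1 + b by ring]
        refine ihb ?_ ?_
        · rw [← (hcomm.symm.iterate_right _).eq, ha, set_smul_bot]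
        · rwa [← Function.iterate_succ_apply]

theorem exists_iterate_set_smul_top_eq_bot_of_finite (hs : s.Finite)
    (hcomm : ∀ f ∈ s, ∀ g ∈ s, Commute f g) (hnil : ∀ f ∈ s, IsNilpotent f) :
    ∃ n, (s • ·)^[n] (⊤ : Submodule R V) = ⊥ := by
  induction s, hs using Set.Finite.induction_on with
  | empty => exact ⟨1, empty_set_smul ⊤⟩
  | @insert f s _ _ ih =>
    obtain ⟨a, ha⟩ := (hnil f (Set.mem_insert f s))
    obtain ⟨b, hb⟩ := ih (fun g hg h hh ↦ hcomm g (.inr hg) h (.inr hh))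
      (fun g hg ↦ hnil g (.inr hg))
    refine ⟨a + b, Set.insert_eq f s ▸ iterate_union_set_smul_eq_bot ?_ ?_ hb⟩
    · exact fun f' hf' g hg ↦ hcomm f' (.inl hf') g (.inr hg)
    · simp [iterate_singleton_set_smul, ha]

theorem exists_iterate_set_smul_top_eq_bot_of_fg (hs : (span R s).FG)
    (hcomm : ∀ f ∈ s, ∀ g ∈ s, Commute f g) (hnil : ∀ f ∈ s, IsNilpotent f) :
    ∃ n, (s • ·)^[n] (⊤ : Submodule R V) = ⊥ := by
  obtain ⟨s', hs's, hspan⟩ := (fg_span_iff_fg_span_finset_subset s).1 hs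
  have hs' : (s • · : Submodule R V → _) = ((s' : Set (Module.End R V)) • ·) := by
    funext N
    refine le_antisymm ?_ (set_smul_mono_left N hs's)
    calc s • N ≤ (span R s : Set (Module.End R V)) • N := set_smul_mono_left N subset_span
      _ = (span R (s' : Set (Module.End R V)) : Set (Module.End R V)) • N := by rw [hspan]
      _ ≤ _ := span_set_smul_le _ N
  rw [hs']
  exact exists_iterate_set_smul_top_eq_bot_of_finite s'.finite_toSet
    (fun f hf g hg ↦ hcomm f (hs's hf) g (hs's hg)) (fun f hf ↦ hnil f (hs's hf))

theorem coe_sup_set_smul_le (p q : Submodule R (Module.End R V)) (N : Submodule R V) :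
    ((p ⊔ q : Submodule R (Module.End R V)) : Set (Module.End R V)) • N ≤
      ((p : Set (Module.End R V)) ∪ q) • N := by
  rw [show p ⊔ q = span R (↑p ∪ ↑q) by rw [span_union, span_eq, span_eq]]
  exact span_set_smul_le _ N

end CommSemiring

section Field

variable {K E : Type*} [Field K] [AddCommGroup E] [Module K E]

theorem exists_iterate_set_smul_eq_bot_of_finiteDimensional {s : Set (Module.End K E)}
    (D : Submodule K E) [FiniteDimensional K D] (hD : ∀ f ∈ s, Set.MapsTo f D D)
    (hcomm : ∀ f ∈ s, ∀ g ∈ s, Commute f g) (hnil : ∀ f ∈ s, IsNilpotent f) :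
    ∃ n, (s • ·)^[n] D = ⊥ := by
  set r : s → Module.End K D := fun f ↦ f.1.restrict (hD f f.2)
  -- the span of the restrictions is finitely generated, as `Module.End K D` is finite-dimensional
  obtain ⟨n, hn⟩ := exists_iterate_set_smul_top_eq_bot_of_fg (s := Set.range r)
    (IsNoetherian.noetherian _)
    (by rintro _ ⟨f, rfl⟩ _ ⟨g, rfl⟩; exact LinearMap.restrict_commute (hcomm f f.2 g g.2) _ _)
    (by rintro _ ⟨f, rfl⟩; exact Module.End.isNilpotent.restrict _ (hnil f f.2))
  have hstep (X : Submodule K D) : s • X.map D.subtype ≤ (Set.range r • X).map D.subtype := by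
    refine set_smul_le _ _ _ fun f x hf hx ↦ ?_
    obtain ⟨y, hy, rfl⟩ := mem_map.1 hx
    exact ⟨r ⟨f, hf⟩ y, mem_set_smul_of_mem_mem ⟨⟨f, hf⟩, rfl⟩ hy, rfl⟩
  have hiter (m : ℕ) (X : Submodule K D) :
      (s • ·)^[m] (X.map D.subtype) ≤ ((Set.range r • ·)^[m] X).map D.subtype := by
    induction m generalizing X with
    | zero => rfl
    | succ m ih =>
      rw [Function.iterate_succ_apply, Function.iterate_succ_apply]
      exact (smul_mono_right s |>.iterate m) (hstep X) |>.trans (ih _)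
  refine ⟨n, le_bot_iff.1 ?_⟩
  simpa [hn] using hiter n ⊤

theorem exists_fg_le_sup_of_finiteDimensional_quotient (A P : Submodule K E)
    [FiniteDimensional K (E ⧸ A)] :
    ∃ U ≤ P, U.FG ∧ P ≤ A ⊓ P ⊔ U := by
  set f := A.mkQ ∘ₗ P.subtype
  obtain ⟨C, hC⟩ := (LinearMap.ker f).exists_isCompl
  have : Module.Finite K C :=
    .equiv ((quotientEquivOfIsCompl _ C hC).symm.trans f.quotKerEquivRange).symm
  refine ⟨C.map P.subtype, map_subtype_le P C, (Module.Finite.iff_fg.1 this).map _, fun x hx ↦ ?_⟩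
  obtain ⟨k, hk, c, hc, hkc⟩ :=
    mem_sup.1 (hC.sup_eq_top ▸ mem_top : (⟨x, hx⟩ : P) ∈ LinearMap.ker f ⊔ C)
  rw [show x = k + c from congrArg Subtype.val hkc.symm]
  exact add_mem_sup ⟨by simpa [f] using hk, k.2⟩ (mem_map_of_mem hc)

end Field

end Submodule

namespace LieSuperStruct

open Submodule

variable {F L : Type*} [Field F] [AddCommGroup L] [Module F L] (S : LieSuperStruct F L)

def adSet (P : Submodule F L) : Set (Module.End F L) := P.map S.bracket

theorem exists_add_eq (z : L) : ∃ z₀ ∈ S.L0, ∃ z₁ ∈ S.L1, z₀ + z₁ = z :=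
  mem_sup.1 (S.compl.sup_eq_top ▸ mem_top)

theorem bracketSpan_eq_adSet_smul (M N : Submodule F L) :
    S.bracketSpan M N = S.adSet M • N := by
  refine le_antisymm (span_le.2 ?_) (set_smul_le _ _ _ ?_)
  · rintro _ ⟨x, hx, y, hy, rfl⟩
    exact mem_set_smul_of_mem_mem (mem_map_of_mem hx) hy
  · rintro _ y ⟨x, hx, rfl⟩ hy
    exact subset_span ⟨x, hx, y, hy, rfl⟩

theorem bracketSpan_mono_left {M M' : Submodule F L} (h : M ≤ M') (N : Submodule F L) :
    S.bracketSpan M N ≤ S.bracketSpan M' N :=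
  span_mono fun _ ⟨x, hx, y, hy, e⟩ ↦ ⟨x, h hx, y, hy, e⟩

theorem adSet_smul_le_of_le_sup {P Q W : Submodule F L} (h : P ≤ Q ⊔ W) (N : Submodule F L) :
    S.adSet P • N ≤ (S.adSet Q ∪ S.adSet W) • N := by
  refine (set_smul_mono_left N ?_).trans (coe_sup_set_smul_le _ _ N)
  rw [← Submodule.map_sup]
  exact map_mono h

variable {S}

theorem bracketSpan_le_of_isIdeal {A : Submodule F L} (hA : S.IsIdeal A) (M : Submodule F L) :
    S.bracketSpan M A ≤ A :=
  span_le.2 fun _ ⟨x, _, y, hy, e⟩ ↦ e ▸ (hA y hy x).2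

theorem adSet_smul_le_of_isIdeal {A : Submodule F L} (hA : S.IsIdeal A) (N : Submodule F L) :
    S.adSet A • N ≤ A :=
  set_smul_le _ _ _ fun _ y ⟨x, hx, e⟩ _ ↦ e ▸ (hA x hx y).1

theorem commute_of_mem_adSet (h00 : ∀ x ∈ S.L0, ∀ y ∈ S.L0, S.bracket x y = 0)
    {P Q : Submodule F L} (hP : P ≤ S.L0) (hQ : Q ≤ S.L0) :
    ∀ f ∈ S.adSet P, ∀ g ∈ S.adSet Q, Commute f g := by
  rintro _ ⟨x, hx, rfl⟩ _ ⟨y, hy, rfl⟩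
  refine LinearMap.ext fun z ↦ ?_
  simpa [h00 x (hP hx) y (hQ hy)] using S.jacobi_even x (hP hx) y z

theorem isNilpotent_of_mem_adSet (had : ∀ x ∈ S.L0, _root_.IsNilpotent (S.ad x))
    {P : Submodule F L} (hP : P ≤ S.L0) : ∀ f ∈ S.adSet P, _root_.IsNilpotent f := by
  rintro _ ⟨x, hx, rfl⟩
  exact had x (hP hx)

theorem exists_iterate_adSet_smul_top_eq_bot_of_fg
    (h00 : ∀ x ∈ S.L0, ∀ y ∈ S.L0, S.bracket x y = 0)
    (had : ∀ x ∈ S.L0, _root_.IsNilpotent (S.ad x))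
    {W : Submodule F L} (hW : W ≤ S.L0) (hfg : W.FG) :
    ∃ n, (S.adSet W • ·)^[n] (⊤ : Submodule F L) = ⊥ :=
  exists_iterate_set_smul_top_eq_bot_of_fg (by simpa [adSet] using hfg.map S.bracket)
    (commute_of_mem_adSet h00 hW hW) (isNilpotent_of_mem_adSet had hW)

theorem exists_iterate_adSet_inf_smul_top_eq_bot
    (h00 : ∀ x ∈ S.L0, ∀ y ∈ S.L0, S.bracket x y = 0)
    (had : ∀ x ∈ S.L0, _root_.IsNilpotent (S.ad x))
    {A : Submodule F L} (hA : S.IsIdeal A) [FiniteDimensional F (S.bracketSpan A A)] :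
    ∃ n, (S.adSet (A ⊓ S.L0) • ·)^[n] (⊤ : Submodule F L) = ⊥ := by
  have hD {N : Submodule F L} (hN : N ≤ A) : S.adSet (A ⊓ S.L0) • N ≤ S.bracketSpan A A := by
    rw [bracketSpan_eq_adSet_smul]
    exact set_smul_le_of_le_le (map_mono inf_le_left) hN
  obtain ⟨n, hn⟩ := exists_iterate_set_smul_eq_bot_of_finiteDimensional (S.bracketSpan A A)
    (fun f hf y hy ↦ hD (bracketSpan_le_of_isIdeal hA A) (mem_set_smul_of_mem_mem hf hy))
    (commute_of_mem_adSet h00 inf_le_right inf_le_right) (isNilpotent_of_mem_adSet had inf_le_right)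
  refine ⟨n + 2, le_bot_iff.1 ?_⟩
  rw [Function.iterate_add_apply]
  refine (smul_mono_right _ |>.iterate n) ?_ |>.trans hn.le
  exact hD ((adSet_smul_le_of_isIdeal hA _).trans' (set_smul_mono_left _ (map_mono inf_le_left)))

theorem bracketSpan_top_le_adSet_smul (h11 : ∀ x ∈ S.L1, ∀ y ∈ S.L1, S.bracket x y = 0)
    {T : Submodule F L} (hT : T ≤ S.L1) : S.bracketSpan T ⊤ ≤ S.adSet S.L0 • T := by
  refine span_le.2 ?_
  rintro _ ⟨x, hx, y, -, rfl⟩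
  obtain ⟨y₀, hy₀, y₁, hy₁, rfl⟩ := S.exists_add_eq y
  rw [map_add, h11 x (hT hx) y₁ hy₁, add_zero, ← neg_neg (S.bracket x y₀),
    ← S.anti_even y₀ hy₀ x]
  exact neg_mem (mem_set_smul_of_mem_mem (mem_map_of_mem hy₀) hx)

theorem iterate_adSet_smul_L1_le_L1 (n : ℕ) : (S.adSet S.L0 • ·)^[n] S.L1 ≤ S.L1 := by
  induction n with
  | zero => exact le_rfl
  | succ n ih =>
    rw [Function.iterate_succ_apply']
    refine set_smul_le _ _ _ ?_
    rintro _ y ⟨x, hx, rfl⟩ hy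
    exact S.grade01 x hx y (ih hy)

theorem lcs_one_le_L1 (h00 : ∀ x ∈ S.L0, ∀ y ∈ S.L0, S.bracket x y = 0)
    (h11 : ∀ x ∈ S.L1, ∀ y ∈ S.L1, S.bracket x y = 0) : S.lcs 1 ≤ S.L1 := by
  refine span_le.2 ?_
  rintro _ ⟨x, -, y, -, rfl⟩
  obtain ⟨x₀, hx₀, x₁, hx₁, rfl⟩ := S.exists_add_eq x
  obtain ⟨y₀, hy₀, y₁, hy₁, rfl⟩ := S.exists_add_eq y
  simp only [map_add, LinearMap.add_apply, h00 x₀ hx₀ y₀ hy₀, h11 x₁ hx₁ y₁ hy₁, zero_add,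
    add_zero]
  exact add_mem (S.grade10 x₁ hx₁ y₀ hy₀) (S.grade01 x₀ hx₀ y₁ hy₁)

theorem lcs_succ_le_iterate_adSet_smul (h00 : ∀ x ∈ S.L0, ∀ y ∈ S.L0, S.bracket x y = 0)
    (h11 : ∀ x ∈ S.L1, ∀ y ∈ S.L1, S.bracket x y = 0) (n : ℕ) :
    S.lcs (n + 1) ≤ (S.adSet S.L0 • ·)^[n] S.L1 := by
  induction n with
  | zero => exact lcs_one_le_L1 h00 h11
  | succ n ih =>
    rw [Function.iterate_succ_apply']
    exact (S.bracketSpan_mono_left ih ⊤).trans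
      (bracketSpan_top_le_adSet_smul h11 (iterate_adSet_smul_L1_le_L1 n))

end LieSuperStruct

theorem nilpotent_of_ideal_general {F L : Type*} [Field F] [AddCommGroup L] [Module F L]
    (S : LieSuperStruct F L)
    (h11 : ∀ x ∈ S.L1, ∀ y ∈ S.L1, S.bracket x y = 0)
    (h00 : ∀ x ∈ S.L0, ∀ y ∈ S.L0, S.bracket x y = 0)
    (had : ∀ x ∈ S.L0, IsNilpotent (S.ad x))
    (A : Submodule F L) (hAideal : S.IsIdeal A)
    (hcodim : FiniteDimensional F (L ⧸ A))
    (hder : FiniteDimensional F (S.bracketSpan A A)) :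
    S.IsNilpotent := by
  obtain ⟨W, hWL0, hWfg, hL0⟩ := Submodule.exists_fg_le_sup_of_finiteDimensional_quotient A S.L0
  obtain ⟨a, ha⟩ := LieSuperStruct.exists_iterate_adSet_smul_top_eq_bot_of_fg h00 had hWL0 hWfg
  obtain ⟨b, hb⟩ := LieSuperStruct.exists_iterate_adSet_inf_smul_top_eq_bot h00 had hAideal
  have hL0 : (S.adSet S.L0 • ·)^[b + a] ⊤ = ⊥ :=
    le_bot_iff.1 ((Monotone.iterate_le_of_le (smul_mono_right _) (S.adSet_smul_le_of_le_sup hL0)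
      _ _).trans (Submodule.iterate_union_set_smul_eq_bot
        (LieSuperStruct.commute_of_mem_adSet h00 inf_le_right hWL0) hb ha).le)
  refine ⟨b + a + 1, le_bot_iff.1 ?_⟩
  exact (S.lcs_succ_le_iterate_adSet_smul h00 h11 _).trans
    (((smul_mono_right _).iterate _ le_top).trans hL0.le)

/-- abelian even and odd parts, ad-nilpotency on the even part, and a
homogeneous ideal of finite codimension with finite-dimensional derived subalgebra
force nilpotency of `L`. -/
theorem nilpotent_of_ideal {F L : Type*} [Field F] [AddCommGroup L] [Module F L]
    (p : ℕ) [CharP F p] (hp : 3 ≤ p) (S : LieSuperStruct F L)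
    (h11 : ∀ x ∈ S.L1, ∀ y ∈ S.L1, S.bracket x y = 0)
    (h00 : ∀ x ∈ S.L0, ∀ y ∈ S.L0, S.bracket x y = 0)
    (had : ∀ x ∈ S.L0, IsNilpotent (S.ad x))
    (A : Submodule F L) (hAideal : S.IsIdeal A) (hAhom : S.IsHomogeneous A)
    (hcodim : FiniteDimensional F (L ⧸ A))
    (hder : FiniteDimensional F (S.bracketSpan A A)) :
    S.IsNilpotent :=
  nilpotent_of_ideal_general S h11 h00 had A hAideal hcodim hder
end

section
/- Let L = L₀ ⊕ L₁ be a Lie superalgebra over a field of characteristic p ≥ 3 with (L₀,L₀) = 0 and (L₁,L₁) = 0, where A is an abelian homogeneous ideal of L of finite codimension. If z is a homogeneous element of L, then the ideal N of L generated by A and z is nilpotent, provided that ad z is nilpotent on L when z ∈ L₀ (when z ∈ L₁ the hypothesis (L₁,L₁)=0 forces (A,z,z)=0 automatically). -/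
/-- if `A` is an abelian homogeneous ideal of finite codimension,
`(L₀,L₀) = (L₁,L₁) = 0`, and `z` is homogeneous with `ad z` nilpotent when `z`
is even, then the ideal generated by `A` and `z` is nilpotent. -/
theorem ideal_gen_nilpotent {F L : Type*} [Field F] [AddCommGroup L] [Module F L]
    (p : ℕ) [CharP F p] (hp : 3 ≤ p) (S : LieSuperStruct F L)
    (h00 : ∀ x ∈ S.L0, ∀ y ∈ S.L0, S.bracket x y = 0)
    (h11 : ∀ x ∈ S.L1, ∀ y ∈ S.L1, S.bracket x y = 0)
    (A : Submodule F L) (hAideal : S.IsIdeal A) (hAhom : S.IsHomogeneous A)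
    (hAab : ∀ x ∈ A, ∀ y ∈ A, S.bracket x y = 0)
    (hcodim : FiniteDimensional F (L ⧸ A))
    (z : L) (hzhom : z ∈ S.L0 ∨ z ∈ S.L1)
    (hznil : z ∈ S.L0 → IsNilpotent (S.ad z)) :
    ∃ n : ℕ, S.lcsOn (sInf {I : Submodule F L | S.IsIdeal I ∧ A ≤ I ∧ z ∈ I}) n = ⊥ := by
    classical
  -- Choose the even element `w` controlling everything.
  obtain ⟨w, hw0, ⟨k, hk⟩, hzw⟩ :
      ∃ w ∈ S.L0, (∃ k : ℕ, (S.ad w) ^ k = 0) ∧ (z = w ∨ z ∈ S.L1) := by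
    rcases hzhom with h | h
    · exact ⟨z, h, hznil h, Or.inl rfl⟩
    · refine ⟨0, S.L0.zero_mem, ⟨1, ?_⟩, Or.inr h⟩
      ext x
      simp [LieSuperStruct.ad]
  set N : Submodule F L := sInf {I : Submodule F L | S.IsIdeal I ∧ A ≤ I ∧ z ∈ I} with hN
  -- decomposition of elements of L and of A into homogeneous parts
  have hdec : ∀ y : L, ∃ y0 ∈ S.L0, ∃ y1 ∈ S.L1, y = y0 + y1 := by
    intro y
    have hy : y ∈ S.L0 ⊔ S.L1 := by rw [S.compl.sup_eq_top]; trivial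
    rcases Submodule.mem_sup.mp hy with ⟨y0, h0, y1, h1, h⟩
    exact ⟨y0, h0, y1, h1, h.symm⟩
  have hAdec : ∀ a ∈ A, ∃ a0 ∈ A ⊓ S.L0, ∃ a1 ∈ A ⊓ S.L1, a = a0 + a1 := by
    intro a ha
    have h2 : a ∈ (A ⊓ S.L0) ⊔ (A ⊓ S.L1) := hAhom ▸ ha
    rcases Submodule.mem_sup.mp h2 with ⟨a0, h0, a1, h1, h⟩
    exact ⟨a0, h0, a1, h1, h.symm⟩
  -- every bracket lies in L1
  have hbr1 : ∀ x y : L, S.bracket x y ∈ S.L1 := by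
    intro x y
    obtain ⟨x0, hx0, x1, hx1, rfl⟩ := hdec x
    obtain ⟨y0, hy0, y1, hy1, rfl⟩ := hdec y
    simp only [map_add, LinearMap.add_apply, h00 x0 hx0 y0 hy0, h11 x1 hx1 y1 hy1,
      zero_add, add_zero]
    refine add_mem ?_ ?_ <;>
      first
        | exact S.grade01 x0 hx0 y1 hy1
        | exact S.grade10 x1 hx1 y0 hy0
  set B : Submodule F L := A ⊓ S.L1 with hB
  set J : Submodule F L := A ⊔ (Submodule.span F {w}) ⊔ S.L1 with hJ
  have hAJ : A ≤ J := le_trans le_sup_left le_sup_left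
  have hL1J : S.L1 ≤ J := le_sup_right
  have hwJ : w ∈ J :=
    Submodule.mem_sup_left (Submodule.mem_sup_right (Submodule.mem_span_singleton_self w))
  have hJideal : S.IsIdeal J := fun x _ y => ⟨hL1J (hbr1 x y), hL1J (hbr1 y x)⟩
  have hzJ : z ∈ J := by
    rcases hzw with rfl | h
    · exact hwJ
    · exact hL1J h
  have hNJ : N ≤ J := sInf_le ⟨hJideal, hAJ, hzJ⟩
  have hJdec : ∀ n ∈ J, ∃ a ∈ A, ∃ c : F, ∃ m ∈ S.L1, n = a + c • w + m := by
    intro n hn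
    rcases Submodule.mem_sup.mp hn with ⟨u, hu, m, hm, rfl⟩
    rcases Submodule.mem_sup.mp hu with ⟨a, ha, v, hv, rfl⟩
    rcases Submodule.mem_span_singleton.mp hv with ⟨c, rfl⟩
    exact ⟨a, ha, c, m, hm, rfl⟩
  -- basic facts about powers of ad w
  have hpow_succ : ∀ (i : ℕ) (x : L),
      ((S.ad w) ^ (i + 1)) x = S.bracket w (((S.ad w) ^ i) x) := by
    intro i x
    rw [pow_succ']
    rfl
  have hadw_L1 : ∀ (i : ℕ), ∀ v ∈ S.L1, ((S.ad w) ^ i) v ∈ S.L1 := by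
    intro i
    induction i with
    | zero => intro v hv; simpa using hv
    | succ i ih =>
      intro v hv
      rw [hpow_succ]
      exact S.grade01 w hw0 _ (ih v hv)
  -- bracket with an even element of A commutes with ad w
  have hcomm : ∀ a0 ∈ S.L0, ∀ (i : ℕ) (v : L),
      S.bracket (((S.ad w) ^ i) v) a0 = ((S.ad w) ^ i) (S.bracket v a0) := by
    intro a0 ha0 i
    induction i with
    | zero => intro v; simp
    | succ i ih =>
      intro v
      rw [hpow_succ, hpow_succ]
      have j := S.jacobi_even w hw0 (((S.ad w) ^ i) v) a0
      rw [h00 w hw0 a0 ha0, map_zero, add_zero] at j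
      rw [← j, ih]
  -- the four "second-argument" expansion helpers
  have hbw_B : ∀ b ∈ B, S.bracket w b ∈ B :=
    fun b hb => Submodule.mem_inf.mpr
      ⟨(hAideal b (Submodule.mem_inf.mp hb).1 w).2,
       S.grade01 w hw0 b (Submodule.mem_inf.mp hb).2⟩
  have hanti : ∀ v : L, S.bracket v w = - S.bracket w v := by
    intro v
    rw [S.anti_even w hw0 v, neg_neg]
  -- key lemma for elements of the form (ad w)^i b with b ∈ B
  have keyB : ∀ (i : ℕ), ∀ b ∈ B, ∀ n ∈ J,
      S.bracket (((S.ad w) ^ i) b) n ∈ Submodule.map ((S.ad w) ^ (i + 1)) B := by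
    intro i b hb n hn
    obtain ⟨hbA, hbL1⟩ := Submodule.mem_inf.mp hb
    obtain ⟨a, ha, c, m, hm, rfl⟩ := hJdec n hn
    obtain ⟨a0, ha0, a1, ha1, rfl⟩ := hAdec a ha
    obtain ⟨ha0A, ha0L0⟩ := Submodule.mem_inf.mp ha0
    obtain ⟨ha1A, ha1L1⟩ := Submodule.mem_inf.mp ha1
    have hxL1 : ((S.ad w) ^ i) b ∈ S.L1 := hadw_L1 i b hbL1
    have e1 : S.bracket (((S.ad w) ^ i) b) a0 = 0 := by
      rw [hcomm a0 ha0L0 i b, hAab b hbA a0 ha0A, map_zero]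
    have e2 : S.bracket (((S.ad w) ^ i) b) a1 = 0 := h11 _ hxL1 a1 ha1L1
    have e3 : S.bracket (((S.ad w) ^ i) b) m = 0 := h11 _ hxL1 m hm
    have e4 : S.bracket (((S.ad w) ^ i) b) ((a0 + a1) + c • w + m)
        = (-c) • (((S.ad w) ^ (i + 1)) b) := by
      simp only [map_add, map_smul, e1, e2, e3, zero_add, add_zero, hanti,
        hpow_succ, smul_neg, neg_smul]
    rw [e4]
    exact Submodule.smul_mem _ _ (Submodule.mem_map_of_mem hb)
  -- key lemma for elements of the form (ad w)^i v with v ∈ L1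
  have keyL1 : ∀ (i : ℕ), ∀ v ∈ S.L1, ∀ n ∈ J,
      S.bracket (((S.ad w) ^ i) v) n ∈
        Submodule.map ((S.ad w) ^ i) B ⊔ Submodule.map ((S.ad w) ^ (i + 1)) S.L1 := by
    intro i v hv n hn
    obtain ⟨a, ha, c, m, hm, rfl⟩ := hJdec n hn
    obtain ⟨a0, ha0, a1, ha1, rfl⟩ := hAdec a ha
    obtain ⟨ha0A, ha0L0⟩ := Submodule.mem_inf.mp ha0
    obtain ⟨ha1A, ha1L1⟩ := Submodule.mem_inf.mp ha1
    have hxL1 : ((S.ad w) ^ i) v ∈ S.L1 := hadw_L1 i v hv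
    have e1 : S.bracket (((S.ad w) ^ i) v) a0 = ((S.ad w) ^ i) (S.bracket v a0) :=
      hcomm a0 ha0L0 i v
    have hva0 : S.bracket v a0 ∈ B :=
      Submodule.mem_inf.mpr ⟨(hAideal a0 ha0A v).2, S.grade10 v hv a0 ha0L0⟩
    have e2 : S.bracket (((S.ad w) ^ i) v) a1 = 0 := h11 _ hxL1 a1 ha1L1
    have e3 : S.bracket (((S.ad w) ^ i) v) m = 0 := h11 _ hxL1 m hm
    have e4 : S.bracket (((S.ad w) ^ i) v) ((a0 + a1) + c • w + m)
        = ((S.ad w) ^ i) (S.bracket v a0) + (-c) • (((S.ad w) ^ (i + 1)) v) := by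
      simp only [map_add, map_smul, e1, e2, e3, zero_add, add_zero, hanti,
        hpow_succ, smul_neg, neg_smul]
    rw [e4]
    exact add_mem
      (Submodule.mem_sup_left (Submodule.mem_map_of_mem hva0))
      (Submodule.mem_sup_right (Submodule.smul_mem _ _ (Submodule.mem_map_of_mem hv)))
  -- base-case helpers: brackets of a0, w with elements of J
  have hA0y : ∀ a0 ∈ A ⊓ S.L0, ∀ y ∈ J, S.bracket a0 y ∈ B := by
    intro a0 ha0 y hy
    obtain ⟨ha0A, ha0L0⟩ := Submodule.mem_inf.mp ha0
    obtain ⟨a, ha, c, m, hm, rfl⟩ := hJdec y hy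
    obtain ⟨b0, hb0, b1, hb1, rfl⟩ := hAdec a ha
    obtain ⟨hb0A, hb0L0⟩ := Submodule.mem_inf.mp hb0
    obtain ⟨hb1A, hb1L1⟩ := Submodule.mem_inf.mp hb1
    have e1 : S.bracket a0 b0 = 0 := hAab a0 ha0A b0 hb0A
    have e2 : S.bracket a0 b1 = 0 := hAab a0 ha0A b1 hb1A
    have e3 : S.bracket a0 w = 0 := h00 a0 ha0L0 w hw0
    have e5 : S.bracket a0 ((b0 + b1) + c • w + m) = S.bracket a0 m := by
      simp only [map_add, map_smul, e1, e2, e3, smul_zero, zero_add, add_zero]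
    rw [e5]
    exact Submodule.mem_inf.mpr ⟨(hAideal a0 ha0A m).1, S.grade01 a0 ha0L0 m hm⟩
  have hwy : ∀ y ∈ J, S.bracket w y ∈ B ⊔ Submodule.map (S.ad w) S.L1 := by
    intro y hy
    obtain ⟨a, ha, c, m, hm, rfl⟩ := hJdec y hy
    obtain ⟨b0, hb0, b1, hb1, rfl⟩ := hAdec a ha
    obtain ⟨hb0A, hb0L0⟩ := Submodule.mem_inf.mp hb0
    obtain ⟨hb1A, hb1L1⟩ := Submodule.mem_inf.mp hb1
    have e1 : S.bracket w b0 = 0 := h00 w hw0 b0 hb0L0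
    have e2 : S.bracket w w = 0 := h00 w hw0 w hw0
    have e5 : S.bracket w ((b0 + b1) + c • w + m)
        = S.bracket w b1 + S.bracket w m := by
      simp only [map_add, map_smul, e1, e2, smul_zero, zero_add, add_zero]
    rw [e5]
    refine add_mem (Submodule.mem_sup_left ?_) (Submodule.mem_sup_right ?_)
    · exact hbw_B b1 (Submodule.mem_inf.mpr ⟨hb1A, hb1L1⟩)
    · exact ⟨m, hm, rfl⟩
  -- the main bound on the lower central series
  have main : ∀ j : ℕ, S.lcsOn N (j + 1) ≤
      Submodule.map ((S.ad w) ^ j) B ⊔ Submodule.map ((S.ad w) ^ (j + 1)) S.L1 := by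
    intro j
    induction j with
    | zero =>
      rw [show S.lcsOn N (0 + 1) = S.bracketSpan (S.lcsOn N 0) N from rfl,
        LieSuperStruct.bracketSpan]
      refine Submodule.span_le.mpr ?_
      rintro _ ⟨x, hx, y, hy, rfl⟩
      have hxJ : x ∈ J := hNJ hx
      have hyJ : y ∈ J := hNJ hy
      obtain ⟨a, ha, c, m, hm, rfl⟩ := hJdec x hxJ
      obtain ⟨a0, ha0, a1, ha1, rfl⟩ := hAdec a ha
      have hmap0 : Submodule.map ((S.ad w) ^ 0) B = B := by
        rw [pow_zero, Module.End.one_eq_id, Submodule.map_id]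
      have hmap1 : Submodule.map ((S.ad w) ^ (0 + 1)) S.L1
          = Submodule.map (S.ad w) S.L1 := by
        rw [zero_add, pow_one]
      rw [SetLike.mem_coe, hmap0, hmap1]
      simp only [map_add, LinearMap.add_apply, map_smul, LinearMap.smul_apply]
      refine add_mem (add_mem (add_mem ?_ ?_) ?_) ?_
      · exact Submodule.mem_sup_left (hA0y a0 ha0 y hyJ)
      · -- a1 ∈ B = A ⊓ L1
        have h5 := keyL1 0 a1 (Submodule.mem_inf.mp ha1).2 y hyJ
        rw [pow_zero, Module.End.one_eq_id, Submodule.map_id, zero_add, pow_one] at h5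
        simpa using h5
      · exact Submodule.smul_mem _ _ (hwy y hyJ)
      · have h5 := keyL1 0 m hm y hyJ
        rw [pow_zero, Module.End.one_eq_id, Submodule.map_id, zero_add, pow_one] at h5
        simpa using h5
    | succ j ih =>
      rw [show S.lcsOn N (j + 1 + 1) = S.bracketSpan (S.lcsOn N (j + 1)) N from rfl,
        LieSuperStruct.bracketSpan]
      refine Submodule.span_le.mpr ?_
      rintro _ ⟨x, hx, y, hy, rfl⟩
      have hyJ : y ∈ J := hNJ hy
      have hx' := ih hx
      rcases Submodule.mem_sup.mp hx' with ⟨x1, hx1, x2, hx2, rfl⟩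
      rcases Submodule.mem_map.mp hx1 with ⟨b, hb, rfl⟩
      rcases Submodule.mem_map.mp hx2 with ⟨u, hu, rfl⟩
      rw [SetLike.mem_coe, map_add, LinearMap.add_apply]
      refine add_mem ?_ ?_
      · exact Submodule.mem_sup_left (keyB j b hb y hyJ)
      · exact keyL1 (j + 1) u hu y hyJ
  -- conclude
  refine ⟨k + 1 + 1, ?_⟩
  have hk1 : (S.ad w) ^ (k + 1) = 0 := by rw [pow_succ, hk, zero_mul]
  have hk2 : (S.ad w) ^ (k + 1 + 1) = 0 := by rw [pow_succ, hk1, zero_mul]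
  have h6 := main (k + 1)
  rw [hk1, hk2] at h6
  have h7 : Submodule.map (0 : Module.End F L) B ⊔
      Submodule.map (0 : Module.End F L) S.L1 = ⊥ := by
    simp [Submodule.map_zero]
  rw [h7] at h6
  exact le_bot_iff.mp h6
end

section
/- Let L be a Lie superalgebra over a field of characteristic p ≥ 3 with commuting elements: specifically suppose x₁, …, x_m ∈ L₀ pairwise commute in U(L), y ∈ L₁, and [xᵢ, y, y, y] = 0 in U(L) for each i. Then the left-normed commutator [x₁⋯x_m, y, y, …, y] with y repeated p times is zero in U(L). -/
/-!
Right and left multiplication by `b` commute, so in characteristic `p` the `p`-th power of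
`x ↦ x b - b x` is `x ↦ x bᵖ - bᵖ x`. Each `aᵢ` is killed by three, hence by `p ≥ 3`, commutators
with `b`, so it commutes with `bᵖ`; then so does their product.
-/

section EngelIter

variable {R : Type*} [Ring R]

theorem engelIter_eq_pow_apply (b : R) (n : ℕ) (x : R) :
    engelIter b n x = ((LinearMap.mulRight ℤ b - LinearMap.mulLeft ℤ b) ^ n) x := by
  induction n with
  | zero => rfl
  | succ n ih =>
    rw [engelIter, Function.iterate_succ_apply', ← engelIter, ih, pow_succ', Module.End.mul_apply]
    rfl

theorem engelIter_eq_zero_of_le {b x : R} {m n : ℕ} (h : engelIter b m x = 0) (hmn : m ≤ n) :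
    engelIter b n x = 0 := by
  obtain ⟨k, rfl⟩ := Nat.exists_eq_add_of_le' hmn
  rw [engelIter, Function.iterate_add_apply]
  change engelIter b k (engelIter b m x) = 0
  rw [h]
  exact Function.iterate_fixed (by simp) k

theorem engelIter_prime {p : ℕ} (hp : p.Prime) (hpR : (p : R) = 0) (b x : R) :
    engelIter b p x = x * b ^ p - b ^ p * x := by
  set ρ := LinearMap.mulRight ℤ b
  set μ := LinearMap.mulLeft ℤ b
  have hpE : (p : Module.End ℤ R) = 0 := by
    ext z
    simp [hpR]
  have hcomm : Commute (ρ - μ) μ :=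
    (LinearMap.commute_mulLeft_right b b).symm.sub_left (Commute.refl _)
  -- expanding `((ρ - μ) + μ) ^ p` rather than `(ρ + (-μ)) ^ p` avoids the sign `(-1) ^ p`
  obtain ⟨r, hr⟩ := hcomm.exists_add_pow_prime_eq hp
  rw [sub_add_cancel, hpE, zero_mul, zero_mul, zero_mul, add_zero] at hr
  rw [engelIter_eq_pow_apply, eq_sub_of_add_eq hr.symm, LinearMap.sub_apply,
    LinearMap.pow_mulRight, LinearMap.pow_mulLeft, LinearMap.mulRight_apply,
    LinearMap.mulLeft_apply]

theorem commute_pow_of_engelIter_eq_zero {p n : ℕ} (hp : p.Prime) (hpR : (p : R) = 0)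
    {b x : R} (h : engelIter b n x = 0) (hnp : n ≤ p) : Commute x (b ^ p) := by
  have := engelIter_eq_zero_of_le h hnp
  rwa [engelIter_prime hp hpR, sub_eq_zero] at this

end EngelIter

theorem engel_p_of_triple_general {F R : Type*} [Field F] [Ring R] [Algebra F R]
    (p : ℕ) [CharP F p] (hp : p.Prime) (hp3 : 3 ≤ p)
    {m : ℕ} (a : Fin m → R) (b : R)
    (hb : ∀ i, engelIter b 3 (a i) = 0) :
    engelIter b p (List.ofFn a).prod = 0 := by
  have hpR : (p : R) = 0 := by
    rw [← map_natCast (algebraMap F R), CharP.cast_eq_zero, map_zero]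
  have hprod : Commute (List.ofFn a).prod (b ^ p) := by
    refine Commute.list_prod_left _ _ fun x hx => ?_
    obtain ⟨i, rfl⟩ := List.mem_ofFn.mp hx
    exact commute_pow_of_engelIter_eq_zero hp hpR (hb i) hp3
  rw [engelIter_prime hp hpR, hprod.eq, sub_self]

/-- if `x₁, …, x_m` pairwise commute and `[xᵢ, y, y, y] = 0`, then the
left-normed `p`-fold commutator `[x₁⋯x_m, y, …, y]` vanishes in characteristic `p ≥ 3`. -/
theorem engel_p_of_triple {F R : Type*} [Field F] [Ring R] [Algebra F R]
    (p : ℕ) [CharP F p] (hp : p.Prime) (hp3 : 3 ≤ p)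
    {m : ℕ} (a : Fin m → R) (b : R)
    (hcomm : ∀ i j, a i * a j = a j * a i)
    (hb : ∀ i, engelIter b 3 (a i) = 0) :
    engelIter b p (List.ofFn a).prod = 0 :=
  engel_p_of_triple_general (F := F) p hp hp3 a b hb
end

section
/- Let R be an associative algebra over a field of characteristic p > 0 and suppose the ideal [R,R]R generated by all commutators is nil of bounded index p^m. If w ∈ R satisfies w^{p^n} ∈ Z(R) + [R,R]R where Z(R) is the center, then w^{p^{m+n}} ∈ Z(R). -/
theorem Commute.add_pow_prime_pow_eq_left_of_pow_eq_zero {R : Type*} [Semiring R] {p : ℕ}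
    (hp : p.Prime) (hpR : (p : R) = 0) {z c : R} (h : Commute z c) {m : ℕ}
    (hc : c ^ p ^ m = 0) : (z + c) ^ p ^ m = z ^ p ^ m := by
  rw [h.add_pow_prime_pow_eq hp, hc, hpR]
  simp

theorem natCast_eq_zero_of_charP_algebra {F R : Type*} [CommSemiring F] [Semiring R]
    [Algebra F R] (p : ℕ) [CharP F p] : (p : R) = 0 := by
  rw [← map_natCast (algebraMap F R), CharP.cast_eq_zero, map_zero]

/-- if the commutator ideal is nil of bounded index `p^m` and
`w^{p^n} ∈ Z(R) + [R,R]R`, then `w^{p^{m+n}} ∈ Z(R)`. -/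
theorem central_power {F R : Type*} [Field F] [Ring R] [Algebra F R]
    (p : ℕ) [CharP F p] (hp : p.Prime) (m n : ℕ)
    (hnil : ∀ r ∈ commIdeal F R, r ^ (p ^ m) = 0)
    (w : R) (hw : ∃ z ∈ Set.center R, w ^ (p ^ n) - z ∈ commIdeal F R) :
    w ^ (p ^ (m + n)) ∈ Set.center R := by
  obtain ⟨z, hz, hc⟩ := hw
  have hzw : Commute z (w ^ p ^ n - z) := (Set.mem_center_iff.mp hz).comm _
  have hpow : w ^ p ^ (m + n) = z ^ p ^ m := by
    rw [pow_add, pow_mul', ← add_sub_cancel z (w ^ p ^ n),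
      hzw.add_pow_prime_pow_eq_left_of_pow_eq_zero hp
        (natCast_eq_zero_of_charP_algebra (F := F) p) (hnil _ hc)]
  rw [hpow]
  exact (Submonoid.center R).pow_mem hz _
end
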